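/- Let s be as in the context (any of the four cases). For every α ∈ Δ_Z and every η ∈ Δ^O, the vector α + η is not a root: α + η ∉ Δ. -/

import Mathlib

/- Common framework: type A_l root system realized in ℝ^{ℕ} (coordinates 1,…,l+1 used),
   the Weyl group as permutations of ℕ acting by permuting coordinates, and the
   Weyl group element s = s₁s₂ of Proposition 4.2 (all four parity cases). -/

noncomputable section

namespace DPW

/-- The ambient vector space (only coordinates 1,…,l+1 are used). -/
abbrev V : Type := ℕ → ℝ

/-- Standard basis vector e_i. -/
def evec (i : ℕ) : V := fun j => if j = i then 1 else 0

/-- The root e_i − e_j. -/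
def rt (i j : ℕ) : V := evec i - evec j

/-- The root system Δ of type A_l. -/
def Delta (l : ℕ) : Set V :=
  {v | ∃ i j, 1 ≤ i ∧ i ≤ l + 1 ∧ 1 ≤ j ∧ j ≤ l + 1 ∧ i ≠ j ∧ v = rt i j}

/-- Positive roots Δ₊. -/
def DeltaPos (l : ℕ) : Set V :=
  {v | ∃ i j, 1 ≤ i ∧ i < j ∧ j ≤ l + 1 ∧ v = rt i j}

/-- Negative roots Δ₋ = −Δ₊. -/
def DeltaNeg (l : ℕ) : Set V := {v | -v ∈ DeltaPos l}

/-- Action of a permutation on V : (σ·v)_j = v_{σ⁻¹(j)}. -/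
def pact (σ : Equiv.Perm ℕ) (v : V) : V := fun j => v (σ⁻¹ j)

/-- row(e_a − e_b) = a. -/
def rowOf (v : V) : ℕ := sInf {a | v a = 1}

/-- col(e_a − e_b) = b. -/
def colOf (v : V) : ℕ := sInf {b | v b = (-1 : ℝ)}

/-- Product of the simple reflections s_{α_i} = (i, i+1) for i in a list. -/
def swapProd (idxs : List ℕ) : Equiv.Perm ℕ :=
  (idxs.map (fun i => Equiv.swap i (i + 1))).prod

/-- The Weyl group element s = s₁s₂ (cases (i)–(iv) according to the parities of
    m = ⌊(l′−1)/2⌋ and l′; here p = l − l′ and s_γ = (m+1, m+p+2)). -/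
def weylS (l l' : ℕ) : Equiv.Perm ℕ :=
  let m := (l' - 1) / 2
  let p := l - l'
  if m % 2 = 0 then
    if l' % 2 = 1 then
      -- case (i)
      (swapProd (List.range' 2 (m / 2) 2) * swapProd (List.range' (m + p + 2) (m / 2) 2)) *
        (swapProd (List.range' 1 (m / 2) 2) * Equiv.swap (m + 1) (m + p + 2) *
          swapProd (List.range' (m + p + 3) (m / 2) 2))
    else
      -- case (ii)
      (swapProd (List.range' 2 (m / 2) 2) * swapProd (List.range' (m + p + 2) (m / 2 + 1) 2)) *
        (swapProd (List.range' 1 (m / 2) 2) * Equiv.swap (m + 1) (m + p + 2) *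
          swapProd (List.range' (m + p + 3) (m / 2) 2))
  else
    if l' % 2 = 1 then
      -- case (iii)
      (swapProd (List.range' 1 ((m + 1) / 2) 2) *
          swapProd (List.range' (m + p + 2) ((m + 1) / 2) 2)) *
        (swapProd (List.range' 2 ((m - 1) / 2) 2) * Equiv.swap (m + 1) (m + p + 2) *
          swapProd (List.range' (m + p + 3) ((m - 1) / 2) 2))
    else
      -- case (iv)
      (swapProd (List.range' 1 ((m + 1) / 2) 2) *
          swapProd (List.range' (m + p + 2) ((m + 1) / 2) 2)) *
        (swapProd (List.range' 2 ((m - 1) / 2) 2) * Equiv.swap (m + 1) (m + p + 2) *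
          swapProd (List.range' (m + p + 3) ((m + 1) / 2) 2))

/-- Δ_s = {α ∈ Δ₊ : sα ∈ Δ₋}. -/
def DeltaS (l : ℕ) (s : Equiv.Perm ℕ) : Set V :=
  {v ∈ DeltaPos l | pact s v ∈ DeltaNeg l}

/-- Δ_{s⁻¹} = {α ∈ Δ₊ : s⁻¹α ∈ Δ₋}. -/
def DeltaSinv (l : ℕ) (s : Equiv.Perm ℕ) : Set V :=
  {v ∈ DeltaPos l | pact s⁻¹ v ∈ DeltaNeg l}

/-- (Δ̄_K)₊ = {α ∈ Δ₊ : sα ≠ α}. -/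
def DeltaKpos (l : ℕ) (s : Equiv.Perm ℕ) : Set V :=
  {v ∈ DeltaPos l | pact s v ≠ v}

/-- (Δ̄_K)₋ = −(Δ̄_K)₊. -/
def DeltaKneg (l : ℕ) (s : Equiv.Perm ℕ) : Set V := {v | -v ∈ DeltaKpos l s}

/-- Δ^C = {α ∈ (Δ̄_K)₊ : row(sα) = row(α)}. -/
def DeltaC (l : ℕ) (s : Equiv.Perm ℕ) : Set V :=
  {v ∈ DeltaKpos l s | rowOf (pact s v) = rowOf v}

/-- Δ^R = {α ∈ (Δ̄_K)₊ : col(sα) = col(α)}. -/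
def DeltaR (l : ℕ) (s : Equiv.Perm ℕ) : Set V :=
  {v ∈ DeltaKpos l s | colOf (pact s v) = colOf v}

/-- Δ^O = (Δ̄_K)₊ \ (Δ^C ∪ Δ^R). -/
def DeltaO (l : ℕ) (s : Equiv.Perm ℕ) : Set V :=
  DeltaKpos l s \ (DeltaC l s ∪ DeltaR l s)

/-- Δ₁^O = {α ∈ Δ^O : row(α) ≥ m+p+2}. -/
def DeltaO1 (l : ℕ) (s : Equiv.Perm ℕ) (m p : ℕ) : Set V :=
  {v ∈ DeltaO l s | m + p + 2 ≤ rowOf v}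

/-- Δ₂^O = {α ∈ Δ^O : col(α) ≤ m+1}. -/
def DeltaO2 (l : ℕ) (s : Equiv.Perm ℕ) (m : ℕ) : Set V :=
  {v ∈ DeltaO l s | colOf v ≤ m + 1}

/-- Δ₃^O = Δ^O \ (Δ₁^O ∪ Δ₂^O). -/
def DeltaO3 (l : ℕ) (s : Equiv.Perm ℕ) (m p : ℕ) : Set V :=
  DeltaO l s \ (DeltaO1 l s m p ∪ DeltaO2 l s m)

/-- Δ̄_K^k = {α ∈ (Δ̄_K)₊ : s^{−j}α ∈ (Δ̄_K)₊ for 1 ≤ j ≤ k−1 and s^{−k}α ∈ (Δ̄_K)₋}. -/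
def DeltaKk (l : ℕ) (s : Equiv.Perm ℕ) (k : ℕ) : Set V :=
  {v ∈ DeltaKpos l s |
    (∀ j, 1 ≤ j → j ≤ k - 1 → pact (s⁻¹ ^ j) v ∈ DeltaKpos l s) ∧
      pact (s⁻¹ ^ k) v ∈ DeltaKneg l s}

/-- d(α) = min{k ≥ 1 : s^{−k}α ∈ Δ₋}. -/
def dd (l : ℕ) (s : Equiv.Perm ℕ) (v : V) : ℕ :=
  sInf {k | 1 ≤ k ∧ pact (s⁻¹ ^ k) v ∈ DeltaNeg l}

/-- Δ_Z = {e_i − e_j : m+2 ≤ i, j ≤ m+p+1, i ≠ j}. -/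
def DeltaZ (m p : ℕ) : Set V :=
  {v | ∃ i j, m + 2 ≤ i ∧ i ≤ m + p + 1 ∧ m + 2 ≤ j ∧ j ≤ m + p + 1 ∧ i ≠ j ∧ v = rt i j}

/-- The ⟨s⟩-orbit of a vector. -/
def orbitOf (s : Equiv.Perm ℕ) (v : V) : Set V := {w | ∃ n : ℤ, w = pact (s ^ n) v}

/-- The set P_κ (for κ ∈ Δ̄_K^k). -/
def Pk (l : ℕ) (s : Equiv.Perm ℕ) (k : ℕ) (κ : V) : Set (V × V) :=
  {q | (∃ i, 2 ≤ i ∧ i ≤ k - 1 ∧ q.1 ∈ DeltaKk l s i) ∧ q.2 ∈ DeltaKk l s k ∧ κ = q.1 + q.2}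

/-- The set P′_κ (for κ ∈ Δ̄_K^k). -/
def Pk' (l : ℕ) (s : Equiv.Perm ℕ) (k : ℕ) (κ : V) : Set (V × V) :=
  {q | q.1 ∈ DeltaKk l s k ∧ q.2 ∈ DeltaKk l s k ∧ κ = q.1 + q.2}

/-- The eigenvector v^λ of case (i) (m even, l′ = 2m+1 odd). -/
def vlam (m p : ℕ) (lam : ℂ) : ℕ → ℂ := fun j =>
  if j = 0 then 0
  else if j ≤ m + 1 then
    (if j % 2 = 1 then lam ^ ((4 * m + 5 - j) / 2) else lam ^ (j / 2))
  else if j ≤ m + p + 1 then 0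
  else if j ≤ m + p + m + 2 then
    (if (j - (m + p)) % 2 = 0 then lam ^ ((m + (j - (m + p))) / 2)
     else lam ^ ((3 * m + 5 - (j - (m + p))) / 2))
  else 0


/-
The Weyl element s fixes every index of the middle block m+2, …, m+p+1, since none of the
simple reflections or s_γ = (m+1, m+p+2) involved touches it. Hence if η = e_a − e_b had a
or b in the block, then sη would keep the row or the column of η, putting η in Δ^C or Δ^R.
So for η ∈ Δ^O both a and b lie outside the block, the supports of α ∈ Δ_Z and η are
disjoint, and α + η has two coordinates equal to 1, which no root e_x − e_y has.
-/

lemma pact_rt (σ : Equiv.Perm ℕ) (a b : ℕ) : pact σ (rt a b) = rt (σ a) (σ b) := by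
  funext k
  simp only [pact, rt, evec, Pi.sub_apply, Equiv.Perm.inv_eq_iff_eq]

lemma eq_of_rt_apply_eq_one {a b k : ℕ} (h : rt a b k = 1) : k = a := by
  simp only [rt, evec, Pi.sub_apply] at h
  split_ifs at h <;> norm_num at h
  assumption

lemma rowOf_rt {a b : ℕ} (hab : a ≠ b) : rowOf (rt a b) = a := by
  have hs : {k | rt a b k = 1} = {a} := by
    ext k
    refine ⟨eq_of_rt_apply_eq_one, ?_⟩
    rintro rfl
    simp [rt, evec, hab]
  rw [rowOf, hs, csInf_singleton]

lemma colOf_rt {a b : ℕ} (hab : a ≠ b) : colOf (rt a b) = b := by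
  have hs : {k | rt a b k = (-1 : ℝ)} = {b} := by
    ext k
    simp only [Set.mem_ofPred_eq, Set.mem_singleton_iff, rt, evec, Pi.sub_apply]
    split_ifs <;> norm_num <;> simp_all
  rw [colOf, hs, csInf_singleton]

lemma rt_add_rt_ne_rt {i j a b x y : ℕ} (hij : i ≠ j) (hab : a ≠ b) (hia : i ≠ a)
    (hib : i ≠ b) (hja : j ≠ a) : rt i j + rt a b ≠ rt x y := by
  intro h
  have hi : rt x y i = 1 := by
    rw [← h]; simp [rt, evec, hij, hia, hib]
  have ha : rt x y a = 1 := by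
    rw [← h]; simp [rt, evec, hia.symm, hja.symm, hab]
  exact hia ((eq_of_rt_apply_eq_one hi).trans (eq_of_rt_apply_eq_one ha).symm)

lemma rt_mem_DeltaC_of_apply_eq {l a b : ℕ} {s : Equiv.Perm ℕ} (hη : rt a b ∈ DeltaKpos l s)
    (hab : a ≠ b) (hsa : s a = a) : rt a b ∈ DeltaC l s := by
  have hasb : a ≠ s b := fun h => hab (s.injective (hsa.trans h))
  exact ⟨hη, by rw [pact_rt, hsa, rowOf_rt hasb, rowOf_rt hab]⟩

lemma rt_mem_DeltaR_of_apply_eq {l a b : ℕ} {s : Equiv.Perm ℕ} (hη : rt a b ∈ DeltaKpos l s)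
    (hab : a ≠ b) (hsb : s b = b) : rt a b ∈ DeltaR l s := by
  have hsab : s a ≠ b := fun h => hab (s.injective (h.trans hsb.symm))
  exact ⟨hη, by rw [pact_rt, hsb, colOf_rt hsab, colOf_rt hab]⟩

lemma swapProd_apply_of_forall_ne {idxs : List ℕ} {x : ℕ} (h : ∀ i ∈ idxs, x ≠ i ∧ x ≠ i + 1) :
    swapProd idxs x = x := by
  induction idxs with
  | nil => rfl
  | cons i rest ih =>
    obtain ⟨hxi, hxi'⟩ := h i List.mem_cons_self
    change Equiv.swap i (i + 1) (swapProd rest x) = x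
    rw [ih fun j hj => h j (List.mem_cons_of_mem _ hj)]
    exact Equiv.swap_apply_of_ne_of_ne hxi hxi'

lemma swapProd_range'_apply_of_lt_or_le {start q x : ℕ} (h : x < start ∨ start + 2 * q ≤ x) :
    swapProd (List.range' start q 2) x = x := by
  refine swapProd_apply_of_forall_ne fun i hi => ?_
  obtain ⟨k, hk, rfl⟩ := List.mem_range'.1 hi
  omega

lemma weylS_apply_of_le_of_le {l l' x : ℕ} (hx₁ : (l' - 1) / 2 + 2 ≤ x)
    (hx₂ : x ≤ (l' - 1) / 2 + (l - l') + 1) : weylS l l' x = x := by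
  dsimp only [weylS]
  split_ifs <;>
    simp (disch := omega) only [Equiv.Perm.mul_apply, swapProd_range'_apply_of_lt_or_le,
      Equiv.swap_apply_of_ne_of_ne]

theorem stmt10_general (l l' m p : ℕ)
    (hm : m = (l' - 1) / 2) (hp : p = l - l') :
    ∀ α ∈ DeltaZ m p, ∀ η ∈ DeltaO l (weylS l l'), α + η ∉ Delta l := by
  subst hm hp
  rintro _ ⟨i, j, hi₁, hi₂, hj₁, hj₂, hij, rfl⟩ η ⟨hK, hCR⟩ ⟨x, y, -, -, -, -, -, hsum⟩
  obtain ⟨a, b, -, hab, -, rfl⟩ := hK.1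
  have ha : ¬((l' - 1) / 2 + 2 ≤ a ∧ a ≤ (l' - 1) / 2 + (l - l') + 1) := fun h =>
    hCR (Or.inl (rt_mem_DeltaC_of_apply_eq hK hab.ne (weylS_apply_of_le_of_le h.1 h.2)))
  have hb : ¬((l' - 1) / 2 + 2 ≤ b ∧ b ≤ (l' - 1) / 2 + (l - l') + 1) := fun h =>
    hCR (Or.inr (rt_mem_DeltaR_of_apply_eq hK hab.ne (weylS_apply_of_le_of_le h.1 h.2)))
  exact rt_add_rt_ne_rt hij hab.ne (by omega) (by omega) (by omega) hsum

/-- for α ∈ Δ_Z and η ∈ Δ^O one has α + η ∉ Δ. -/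
theorem stmt10 (l l' m p : ℕ) (h5 : 5 ≤ l') (hll : l' ≤ l)
    (hm : m = (l' - 1) / 2) (hp : p = l - l') :
    ∀ α ∈ DeltaZ m p, ∀ η ∈ DeltaO l (weylS l l'), α + η ∉ Delta l :=
  stmt10_general l l' m p hm hp
end DPW
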